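/- Let S ⊆ k⟨X⟩ with each s ∈ S monic and < a monomial well order on X*. If Irr(S) = {u ∈ X* : u ≠ a s̄ b for all s ∈ S, a,b ∈ X*} is a linear basis of k⟨X⟩/Id(S), then every nonzero f ∈ Id(S) has leading word of the form a s̄ b for some s ∈ S and a,b ∈ X*. -/

import Mathlib

/-!
Reducing leading words by `S` (well-founded induction on the leading word; the monomial order
makes `a s̄ b` the leading word of `a s b`) writes every polynomial modulo `Id(S)` as a combination of
words of `Irr(S)` no larger than its leading word. If some `f ∈ Id(S)` had its leading word `w`
in `Irr(S)`, reducing only the lower terms gives an element of `Id(S)` supported on `Irr(S)` with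
nonzero coefficient at `w`, contradicting the linear independence of `Irr(S)` modulo `Id(S)`.
-/

/-- `w` is the leading word of `f`: it occurs in `f` and dominates every word
occurring in `f`. -/
def IsLead {k X : Type*} [Field k] [LinearOrder (FreeMonoid X)]
    (f : MonoidAlgebra k (FreeMonoid X)) (w : FreeMonoid X) : Prop :=
  w ∈ f.coeff.support ∧ ∀ u ∈ f.coeff.support, u ≤ w

/-- The two-sided ideal `Id(S)` of `k⟨X⟩` generated by `S`, as the span of
all elements `a·s·b` with `a, b` monomials. -/
noncomputable def IdS (k : Type*) {X : Type*} [Field k]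
    (S : Set (MonoidAlgebra k (FreeMonoid X))) :
    Submodule k (MonoidAlgebra k (FreeMonoid X)) :=
  Submodule.span k {p | ∃ s ∈ S, ∃ a b : FreeMonoid X,
    p = (MonoidAlgebra.of k (FreeMonoid X) a) * s * (MonoidAlgebra.of k (FreeMonoid X) b)}

/-- The set `Irr(S)` of words containing no leading word of `S` as a subword. -/
def IrrS {k X : Type*} [Field k] [LinearOrder (FreeMonoid X)]
    (S : Set (MonoidAlgebra k (FreeMonoid X))) : Set (FreeMonoid X) :=
  {u | ∀ s ∈ S, ∀ w a b : FreeMonoid X, IsLead s w → u ≠ a * w * b}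

open MonoidAlgebra

section CompositionDiamond

variable {k X : Type*} [Field k]

theorem coeff_of_mul_mul (s : MonoidAlgebra k (FreeMonoid X)) (a w b : FreeMonoid X) :
    (of k (FreeMonoid X) a * s * of k (FreeMonoid X) b).coeff (a * w * b) = s.coeff w := by
  simp [of_apply]

variable [LinearOrder (FreeMonoid X)]

theorem isLead_max' {f : MonoidAlgebra k (FreeMonoid X)} (hf : f.coeff.support.Nonempty) :
    IsLead f (f.coeff.support.max' hf) :=
  ⟨f.coeff.support.max'_mem hf, f.coeff.support.le_max'⟩

theorem isLead_of (w : FreeMonoid X) : IsLead (of k (FreeMonoid X) w) w := by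
  simp [IsLead, of_apply]

theorem IsLead.of_mul_mul [MulLeftMono (FreeMonoid X)] [MulRightMono (FreeMonoid X)]
    {s : MonoidAlgebra k (FreeMonoid X)} {w : FreeMonoid X} (hs : IsLead s w)
    (a b : FreeMonoid X) :
    IsLead (of k (FreeMonoid X) a * s * of k (FreeMonoid X) b) (a * w * b) := by
  have hsupp : (of k (FreeMonoid X) a * s * of k (FreeMonoid X) b).coeff.support =
      (s.coeff.support.map (mulLeftEmbedding a)).map (mulRightEmbedding b) := by
    rw [of_apply, of_apply, support_coeff_mul_single _ _ (by simp),
      support_coeff_single_mul _ _ (by simp)]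
  simp only [IsLead, hsupp, Finset.mem_map, mulLeftEmbedding_apply, mulRightEmbedding_apply]
  refine ⟨⟨_, ⟨w, hs.1, rfl⟩, rfl⟩, ?_⟩
  rintro _ ⟨_, ⟨v, hv, rfl⟩, rfl⟩
  exact mul_le_mul_left (mul_le_mul_right (hs.2 v hv) a) b

theorem IsLead.support_sub_smul_lt {f g : MonoidAlgebra k (FreeMonoid X)} {w : FreeMonoid X}
    (hf : IsLead f w) (hg : IsLead g w) (hgw : g.coeff w = 1) :
    ∀ u ∈ (f - f.coeff w • g).coeff.support, u < w := by
  classical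
  intro u hu
  have hne : u ≠ w := by
    rintro rfl
    simp [Finsupp.mem_support_iff, hgw] at hu
  refine lt_of_le_of_ne ?_ hne
  rcases Finset.mem_union.1 (Finsupp.support_sub hu) with h | h
  · exact hf.2 u h
  · exact hg.2 u (Finsupp.support_smul h)

theorem IsLead.unique {f : MonoidAlgebra k (FreeMonoid X)} {v w : FreeMonoid X}
    (hv : IsLead f v) (hw : IsLead f w) : v = w :=
  le_antisymm (hw.2 v hv.1) (hv.2 w hw.1)

theorem exists_mem_idS_isLead_of_notMem_irrS [MulLeftMono (FreeMonoid X)]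
    [MulRightMono (FreeMonoid X)] {S : Set (MonoidAlgebra k (FreeMonoid X))}
    (hmonic : ∀ s ∈ S, ∃ w : FreeMonoid X, IsLead s w ∧ s.coeff w = 1)
    {w : FreeMonoid X} (hw : w ∉ IrrS S) :
    ∃ g ∈ IdS k S, IsLead g w ∧ g.coeff w = 1 := by
  simp only [IrrS, Set.mem_ofPred_eq, not_forall, not_not] at hw
  obtain ⟨s, hs, v, a, b, hv, rfl⟩ := hw
  obtain ⟨v', hv', hcoeff⟩ := hmonic s hs
  obtain rfl := hv.unique hv'
  exact ⟨_, Submodule.subset_span ⟨s, hs, a, b, rfl⟩, hv.of_mul_mul a b,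
    by rw [coeff_of_mul_mul, hcoeff]⟩

theorem IsLead.exists_sub_mem_idS_of_mem_irrS {S : Set (MonoidAlgebra k (FreeMonoid X))}
    {f : MonoidAlgebra k (FreeMonoid X)} {w : FreeMonoid X} (hf : IsLead f w) (hw : w ∈ IrrS S)
    (hreduce : ∀ f : MonoidAlgebra k (FreeMonoid X), (∀ u ∈ f.coeff.support, u < w) →
      ∃ r, f - r ∈ IdS k S ∧ ∀ u ∈ r.coeff.support, u ∈ IrrS S ∧ u < w) :
    ∃ r, f - r ∈ IdS k S ∧ (∀ u ∈ r.coeff.support, u ∈ IrrS S ∧ u ≤ w) ∧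
      r.coeff w = f.coeff w := by
  classical
  obtain ⟨r, hr, hrw⟩ := hreduce _ (hf.support_sub_smul_lt (isLead_of w) (by simp [of_apply]))
  have hrw₀ : r.coeff w = 0 := Finsupp.notMem_support_iff.1 fun h ↦ (hrw w h).2.false
  refine ⟨r + f.coeff w • of k (FreeMonoid X) w, by rwa [sub_add_eq_sub_sub_swap], ?_, ?_⟩
  · intro u hu
    rcases Finset.mem_union.1 (Finsupp.support_add hu) with h | h
    · exact ⟨(hrw u h).1, (hrw u h).2.le⟩
    · obtain rfl : u = w := by simpa [of_apply] using Finsupp.support_smul h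
      exact ⟨hw, le_rfl⟩
  · simp [of_apply, hrw₀]

theorem exists_sub_mem_idS_of_support_lt [WellFoundedLT (FreeMonoid X)]
    [MulLeftMono (FreeMonoid X)] [MulRightMono (FreeMonoid X)]
    {S : Set (MonoidAlgebra k (FreeMonoid X))}
    (hmonic : ∀ s ∈ S, ∃ w : FreeMonoid X, IsLead s w ∧ s.coeff w = 1) (w : FreeMonoid X) :
    ∀ f : MonoidAlgebra k (FreeMonoid X), (∀ u ∈ f.coeff.support, u < w) →
      ∃ r, f - r ∈ IdS k S ∧ ∀ u ∈ r.coeff.support, u ∈ IrrS S ∧ u < w := by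
  induction w using WellFoundedLT.induction with | ind w ih
  intro f hf
  rcases f.coeff.support.eq_empty_or_nonempty with hf0 | hne
  · exact ⟨f, by simp, by simp [hf0]⟩
  have hlead := isLead_max' hne
  set w₀ := f.coeff.support.max' hne
  have hw₀ : w₀ < w := hf w₀ hlead.1
  by_cases hirr : w₀ ∈ IrrS S
  · obtain ⟨r, hr, hrw, -⟩ := hlead.exists_sub_mem_idS_of_mem_irrS hirr (ih w₀ hw₀)
    exact ⟨r, hr, fun u hu ↦ ⟨(hrw u hu).1, (hrw u hu).2.trans_lt hw₀⟩⟩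
  · obtain ⟨g, hg, hgw, hg1⟩ := exists_mem_idS_isLead_of_notMem_irrS hmonic hirr
    obtain ⟨r, hr, hrw⟩ := ih w₀ hw₀ _ (hlead.support_sub_smul_lt hgw hg1)
    refine ⟨r, ?_, fun u hu ↦ ⟨(hrw u hu).1, (hrw u hu).2.trans hw₀⟩⟩
    rw [← sub_add_cancel (f - r) (f.coeff w₀ • g), sub_right_comm]
    exact add_mem hr (Submodule.smul_mem _ _ hg)

theorem eq_zero_of_mem_idS_of_support_subset_irrS {S : Set (MonoidAlgebra k (FreeMonoid X))}
    (hli : LinearIndependent k (fun u : IrrS S =>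
      Submodule.Quotient.mk (p := IdS k S) (of k (FreeMonoid X) (u : FreeMonoid X))))
    {r : MonoidAlgebra k (FreeMonoid X)} (hr : r ∈ IdS k S)
    (hrS : ∀ u ∈ r.coeff.support, u ∈ IrrS S) : r = 0 := by
  have hdisj := Submodule.range_ker_disjoint (f := (IdS k S).mkQ) hli
  rw [Submodule.ker_mkQ] at hdisj
  refine Submodule.disjoint_def.1 hdisj r ?_ hr
  refine Submodule.span_mono ?_ (mem_span_support_coeff r)
  rintro _ ⟨u, hu, rfl⟩
  exact ⟨⟨u, hrS u hu⟩, rfl⟩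

end CompositionDiamond

/-- (iii) ⟹ (ii) in the Composition-Diamond lemma: if `Irr(S)` is a linear
basis of `k⟨X⟩/Id(S)`, then every nonzero `f ∈ Id(S)` has leading word of
the form `a s̄ b` for some `s ∈ S` and words `a, b`. -/
theorem CD_lemma_iii_implies_ii {k X : Type*} [Field k] [LinearOrder (FreeMonoid X)]
    (hwf : WellFoundedLT (FreeMonoid X))
    (hmono : ∀ u v w₁ w₂ : FreeMonoid X, u < v → w₁ * u * w₂ < w₁ * v * w₂)
    (S : Set (MonoidAlgebra k (FreeMonoid X)))
    (hmonic : ∀ s ∈ S, ∃ w : FreeMonoid X, IsLead s w ∧ s.coeff w = 1)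
    (hbasis : LinearIndependent k (fun u : IrrS S =>
        Submodule.Quotient.mk (p := IdS k S)
          (MonoidAlgebra.of k (FreeMonoid X) (u : FreeMonoid X))) ∧
      Submodule.span k (Set.range (fun u : IrrS S =>
        Submodule.Quotient.mk (p := IdS k S)
          (MonoidAlgebra.of k (FreeMonoid X) (u : FreeMonoid X)))) = ⊤) :
    ∀ f ∈ IdS k S, f ≠ 0 →
      ∃ s ∈ S, ∃ w a b : FreeMonoid X, IsLead s w ∧ IsLead f (a * w * b) := by
  intro f hf hf0
  have : MulLeftMono (FreeMonoid X) :=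
    ⟨fun a _ _ h ↦ by simpa using StrictMono.monotone (hmono · · a 1) h⟩
  have : MulRightMono (FreeMonoid X) :=
    ⟨fun b _ _ h ↦ by simpa using StrictMono.monotone (hmono · · 1 b) h⟩
  have hne : f.coeff.support.Nonempty := by simpa [Finsupp.support_nonempty_iff] using hf0
  have hlead := isLead_max' hne
  by_contra! hcon
  have hirr : f.coeff.support.max' hne ∈ IrrS S := fun s hs w a b hw heq ↦
    hcon s hs w a b hw (heq ▸ hlead)
  obtain ⟨r, hr, hrS, hrw⟩ := hlead.exists_sub_mem_idS_of_mem_irrS hirr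
    (exists_sub_mem_idS_of_support_lt hmonic _)
  have hr0 : r = 0 := eq_zero_of_mem_idS_of_support_subset_irrS hbasis.1
    (by simpa using sub_mem hf hr) fun u hu ↦ (hrS u hu).1
  exact Finsupp.mem_support_iff.1 hlead.1 (by simp [← hrw, hr0])
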